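/- (Vanishing of coefficients) Let Φ₁,…,Φₙ be nonzero generalized power series and i₁,…,iₙ integers with some iⱼ ≠ 1. Then for any set of variables X₁,…,Xₙ, the κ[[e^H]]-coefficient of (dΦ₁/Φ₁^{i₁}) ∧ ⋯ ∧ (dΦₙ/Φₙ^{iₙ}) at dlog X := (dX₁∧⋯∧dXₙ)/(X₁⋯Xₙ) is zero. -/

import Mathlib

/-- Data exhibiting a totally ordered abelian group `G` as generated freely by a
subgroup `H` and `n` elements `u 0, …, u (n-1)`: every `g ∈ G` is uniquely
`h + Σᵢ sᵢ • uᵢ` with `h ∈ H`; `coord g` records the unique exponents `sᵢ`. -/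
structure FreeData (G : Type*) [AddCommGroup G] [LinearOrder G] [IsOrderedAddMonoid G] (n : ℕ) where
  H : AddSubgroup G
  u : Fin n → G
  coord : G → Fin n → ℤ
  sub_mem : ∀ g : G, g - ∑ i, coord g i • u i ∈ H
  coord_unique : ∀ g : G, ∀ s : Fin n → ℤ, g - ∑ i, s i • u i ∈ H → s = coord g

variable {κ : Type*} [Field κ] {G : Type*} [AddCommGroup G] [LinearOrder G] [IsOrderedAddMonoid G] {n : ℕ}

/-- The partial derivation `∂/∂Xᵢ` with respect to the variable `Xᵢ = e^{uᵢ}`,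
defined termwise: it multiplies the term `φ e^h X₁^{j₁} ⋯ Xₙ^{jₙ}` by `jᵢ` and
decreases the exponent of `Xᵢ` by one. -/
noncomputable def FreeData.pderiv (F : FreeData G n) (i : Fin n) (Φ : HahnSeries G κ) :
    HahnSeries G κ where
  coeff g := (F.coord (g + F.u i) i : κ) * Φ.coeff (g + F.u i)
  isPWO_support' := by
    have hsub : Function.support
        (fun g => (F.coord (g + F.u i) i : κ) * Φ.coeff (g + F.u i)) ⊆
        (fun x => x - F.u i) '' Φ.support := by
      intro g hg
      refine ⟨g + F.u i, ?_, add_sub_cancel_right g (F.u i)⟩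
      intro h
      simp [h] at hg
    exact (Φ.isPWO_support.image_of_monotone
      (fun a b hab => sub_le_sub_right hab _)).mono hsub

/-- The variable `Xᵢ = e^{uᵢ}` associated to free generating data. -/
noncomputable def FreeData.X (F : FreeData G n) (κ : Type*) [Field κ] (i : Fin n) :
    HahnSeries G κ :=
  HahnSeries.single (F.u i) 1

theorem test (F : FreeData G n) (i : Fin n) (Φ : HahnSeries G κ) : F.pderiv i Φ = F.pderiv i Φ := rfl

section Aux

variable {R : Type*} [CommRing R] {S : Type*} [CommRing S]

namespace FreeData

theorem coord_spec (F : FreeData G n) {g : G} {s : Fin n → ℤ}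
    (h : g - ∑ i, s i • F.u i ∈ F.H) : s = F.coord g := F.coord_unique g s h

theorem coord_of_mem (F : FreeData G n) {h : G} (hh : h ∈ F.H) : F.coord h = 0 := by
  refine (F.coord_spec (s := 0) ?_).symm
  simpa using hh

theorem coord_add (F : FreeData G n) (a b : G) :
    F.coord (a + b) = F.coord a + F.coord b := by
  refine (F.coord_spec ?_).symm
  have h : ∑ i, (F.coord a + F.coord b) i • F.u i
      = (∑ i, F.coord a i • F.u i) + ∑ i, F.coord b i • F.u i := by
    rw [← Finset.sum_add_distrib]
    exact Finset.sum_congr rfl fun i _ => by simp [add_smul]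
  rw [h]
  have := F.H.add_mem (F.sub_mem a) (F.sub_mem b)
  convert this using 1
  abel

/-- `coord · k` as an additive monoid hom. -/
def coordHom (F : FreeData G n) (k : Fin n) : G →+ ℤ where
  toFun g := F.coord g k
  map_zero' := by
    show F.coord 0 k = 0
    rw [F.coord_of_mem F.H.zero_mem]; rfl
  map_add' a b := by
    show F.coord (a + b) k = F.coord a k + F.coord b k
    rw [F.coord_add]; rfl

theorem coord_u (F : FreeData G n) (k : Fin n) : F.coord (F.u k) = Pi.single k 1 := by
  refine (F.coord_spec ?_).symm
  have h : ∑ i, (Pi.single k (1:ℤ) : Fin n → ℤ) i • F.u i = F.u k := by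
    rw [Finset.sum_eq_single k]
    · simp
    · intro i _ hik
      rw [Pi.single_eq_of_ne hik, zero_smul]
    · intro h; exact absurd (Finset.mem_univ k) h
  rw [h]
  simpa using F.H.zero_mem

/-- The Euler operator `X_k ∂/∂X_k`, acting termwise by multiplication with the
`k`-th coordinate. -/
noncomputable def Eul (F : FreeData G n) (k : Fin n) (Φ : HahnSeries G R) :
    HahnSeries G R where
  coeff g := (F.coord g k : R) * Φ.coeff g
  isPWO_support' := Φ.isPWO_support.mono (fun g hg => by
    simp only [Function.mem_support, ne_eq] at hg ⊢
    exact fun h => hg (by rw [h, mul_zero]))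

@[simp] theorem Eul_coeff (F : FreeData G n) (k : Fin n) (Φ : HahnSeries G R) (g : G) :
    (F.Eul k Φ).coeff g = (F.coord g k : R) * Φ.coeff g := rfl

theorem support_Eul (F : FreeData G n) (k : Fin n) (Φ : HahnSeries G R) :
    (F.Eul k Φ).support ⊆ Φ.support := fun g hg => by
  simp only [HahnSeries.mem_support, Eul_coeff, ne_eq] at hg ⊢
  exact fun h => hg (by rw [h, mul_zero])

theorem Eul_add (F : FreeData G n) (k : Fin n) (x y : HahnSeries G R) :
    F.Eul k (x + y) = F.Eul k x + F.Eul k y := by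
  ext g; simp [mul_add]

theorem Eul_neg (F : FreeData G n) (k : Fin n) (x : HahnSeries G R) :
    F.Eul k (-x) = - F.Eul k x := by
  ext g; simp

theorem Eul_single (F : FreeData G n) (k : Fin n) (a : G) (r : R) :
    F.Eul k (HahnSeries.single a r) = (F.coord a k : R) • HahnSeries.single a r := by
  ext g
  simp only [Eul_coeff, HahnSeries.coeff_smul, HahnSeries.coeff_single, smul_eq_mul]
  split_ifs with h
  · subst h; rfl
  · rw [mul_zero, mul_zero]

theorem Eul_one (F : FreeData G n) (k : Fin n) : F.Eul k (1 : HahnSeries G R) = 0 := by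
  rw [← HahnSeries.single_zero_one, Eul_single]
  have : F.coord (0:G) = 0 := F.coord_of_mem F.H.zero_mem
  simp [this]

theorem mul_coeff_subset {x y : HahnSeries G R} {s t : Set G} (hs : s.IsPWO) (ht : t.IsPWO)
    (hx : x.support ⊆ s) (hy : y.support ⊆ t) (a : G) :
    (x * y).coeff a = ∑ ij ∈ Finset.addAntidiagonal hs ht a, x.coeff ij.1 * y.coeff ij.2 := by
  rw [HahnSeries.coeff_mul_left' hs hx]
  refine Finset.sum_subset (Finset.addAntidiagonal_mono_right hy) fun p hp hnp => ?_
  replace hp := Finset.mem_addAntidiagonal.mp hp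
  replace hnp := mt Finset.mem_addAntidiagonal.mpr hnp
  have h0 : y.coeff p.2 = 0 := by
    by_contra hc
    exact hnp ⟨hp.1, hc, hp.2.2⟩
  rw [h0, mul_zero]

theorem Eul_mul (F : FreeData G n) (k : Fin n) (x y : HahnSeries G R) :
    F.Eul k (x * y) = F.Eul k x * y + x * F.Eul k y := by
  ext g
  rw [HahnSeries.coeff_add, Eul_coeff, HahnSeries.coeff_mul,
    mul_coeff_subset x.isPWO_support y.isPWO_support (F.support_Eul k x) Set.Subset.rfl g,
    mul_coeff_subset x.isPWO_support y.isPWO_support Set.Subset.rfl (F.support_Eul k y) g,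
    ← Finset.sum_add_distrib, Finset.mul_sum]
  refine Finset.sum_congr rfl fun p hp => ?_
  obtain ⟨h1, h2, h3⟩ := Finset.mem_addAntidiagonal.mp hp
  rw [Eul_coeff, Eul_coeff, ← h3, F.coord_add, Pi.add_apply]
  push_cast
  ring

theorem Eul_pow (F : FreeData G n) (k : Fin n) (x : HahnSeries G R) (m : ℕ) :
    F.Eul k (x ^ (m + 1)) = ((m + 1 : ℕ) : HahnSeries G R) * (x ^ m * F.Eul k x) := by
  induction m with
  | zero => simp
  | succ m ih =>
    rw [pow_succ, Eul_mul, ih]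
    push_cast
    ring

theorem X_mul_pderiv (F : FreeData G n) (k : Fin n) (Φ : HahnSeries G κ) :
    F.X κ k * F.pderiv k Φ = F.Eul k Φ := by
  ext g
  have hg : g = (g - F.u k) + F.u k := (sub_add_cancel g (F.u k)).symm
  rw [FreeData.X, hg, HahnSeries.coeff_single_mul_add, one_mul]
  show (F.coord (g - F.u k + F.u k) k : κ) * Φ.coeff (g - F.u k + F.u k) = _
  rw [sub_add_cancel]
  rfl


open Finset in
theorem coeff_sum {α : Type*} (s : Finset α) (f : α → HahnSeries G R) (g : G) :
    (∑ a ∈ s, f a).coeff g = ∑ a ∈ s, (f a).coeff g := by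
  classical
  induction s using Finset.induction_on with
  | empty => simp
  | insert _ _ h ih => rw [Finset.sum_insert h, Finset.sum_insert h, HahnSeries.coeff_add, ih]

theorem C_mul_coeff (r : R) (x : HahnSeries G R) (g : G) :
    (HahnSeries.C r * x).coeff g = r * x.coeff g := by
  rw [show (HahnSeries.C r : HahnSeries G R) = HahnSeries.single 0 r from rfl,
    HahnSeries.single_zero_mul_eq_smul, HahnSeries.coeff_smul, smul_eq_mul]

theorem det_rows_sum_zero {m : Type*} [DecidableEq m] [Fintype m] (A : Matrix m m R)
    (S : Finset m) (j : m) (hj : j ∈ S) (h : ∑ i ∈ S, A i = 0) : A.det = 0 := by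
  have h1 := Matrix.det_updateRow_sum_aux A (S.erase j) (Finset.notMem_erase j S)
    (fun _ => (1:R)) 1
  have h2 : (1:R) • A j + ∑ k ∈ S.erase j, (1:R) • A k = ∑ i ∈ S, A i := by
    simp only [one_smul]
    exact Finset.add_sum_erase S A hj
  rw [h2, h] at h1
  have h3 : (A.updateRow j (0 : m → R)).det = 0 :=
    Matrix.det_eq_zero_of_row_eq_zero j (fun k => by simp)
  rw [h3] at h1
  simpa using h1.symm

open scoped Pointwise in
variable (G) in
/-- Iterated sum-sets. -/
def sumSet : ∀ (m : ℕ), (Fin m → Set G) → Set G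
  | 0, _ => {0}
  | m + 1, s => s 0 + sumSet m fun i => s i.succ

open scoped Pointwise in
theorem sumSet_succ {m : ℕ} (s : Fin (m+1) → Set G) :
    sumSet G (m+1) s = s 0 + sumSet G m (fun i => s i.succ) := rfl

theorem sumSet_isPWO : ∀ {m : ℕ} (s : Fin m → Set G), (∀ i, (s i).IsPWO) →
    (sumSet G m s).IsPWO
  | 0, _, _ => (Set.finite_singleton 0).isPWO
  | m + 1, s, hs => by
    rw [sumSet_succ]
    exact ((hs 0).add (sumSet_isPWO _ fun i => hs i.succ))

open scoped Classical in
variable (G) in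
/-- The finite set of decompositions of `g` as sums with parts in prescribed PWO sets. -/
noncomputable def decs : ∀ (m : ℕ) (s : Fin m → Set G), (∀ i, (s i).IsPWO) → G →
    Finset (Fin m → G)
  | 0, _, _, g => if g = 0 then {fun i => i.elim0} else ∅
  | m + 1, s, hs, g =>
    (Finset.addAntidiagonal (hs 0) (sumSet_isPWO (fun i => s i.succ) (fun i => hs i.succ))
      g).biUnion
      fun p => (decs m (fun i => s i.succ) (fun i => hs i.succ) p.2).image (Fin.cons p.1)

theorem sum_eq_of_mem_decs : ∀ {m : ℕ} {s : Fin m → Set G} {hs : ∀ i, (s i).IsPWO} {g : G}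
    {d : Fin m → G}, d ∈ decs G m s hs g → ∑ i, d i = g := by
  intro m
  induction m with
  | zero =>
    intro s hs g d hd
    simp only [decs] at hd
    split_ifs at hd with h
    · subst h; simp
    · exact absurd hd (Finset.notMem_empty d)
  | succ m ih =>
    intro s hs g d hd
    simp only [decs, Finset.mem_biUnion] at hd
    obtain ⟨p, hp, hd⟩ := hd
    rw [Finset.mem_image] at hd
    obtain ⟨d', hd', rfl⟩ := hd
    replace hp := Finset.mem_addAntidiagonal.mp hp
    rw [Fin.sum_univ_succ]
    simp only [Fin.cons_zero, Fin.cons_succ]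
    rw [ih hd']
    exact hp.2.2

theorem support_prod_subset_sumSet : ∀ {m : ℕ} (s : Fin m → Set G)
    (B : Fin m → HahnSeries G R), (∀ i, (B i).support ⊆ s i) →
    (∏ i, B i).support ⊆ sumSet G m s := by
  intro m
  induction m with
  | zero =>
    intro s B _ g hg
    rw [Fin.prod_univ_zero, ← HahnSeries.single_zero_one] at hg
    exact HahnSeries.support_single_subset hg
  | succ m ih =>
    intro s B hB
    rw [Fin.prod_univ_succ, sumSet_succ]
    refine Set.Subset.trans HahnSeries.support_mul_subset ?_
    exact Set.add_subset_add (hB 0) (ih _ _ fun i => hB i.succ)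

theorem prod_coeff : ∀ {m : ℕ} (s : Fin m → Set G) (hs : ∀ i, (s i).IsPWO)
    (B : Fin m → HahnSeries G R), (∀ i, (B i).support ⊆ s i) → ∀ (g : G),
    (∏ i, B i).coeff g = ∑ d ∈ decs G m s hs g, ∏ i, (B i).coeff (d i) := by
  intro m
  induction m with
  | zero =>
    intro s hs B _ g
    rw [Fin.prod_univ_zero]
    simp only [decs]
    split_ifs with h
    · subst h
      rw [Finset.sum_singleton, Fin.prod_univ_zero, HahnSeries.coeff_one, if_pos rfl]
    · rw [Finset.sum_empty, HahnSeries.coeff_one, if_neg h]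
  | succ m ih =>
    intro s hs B hB g
    classical
    rw [Fin.prod_univ_succ,
      mul_coeff_subset (hs 0) (sumSet_isPWO _ fun i => hs i.succ) (hB 0)
        (support_prod_subset_sumSet _ _ fun i => hB i.succ) g]
    simp only [decs]
    rw [Finset.sum_biUnion ?hdisj]
    case hdisj =>
      intro p hp q hq hpq
      refine Finset.disjoint_left.mpr fun d hdp hdq => hpq ?_
      rw [Finset.mem_image] at hdp hdq
      obtain ⟨d1, hd1, he1⟩ := hdp
      obtain ⟨d2, hd2, he2⟩ := hdq
      have h0 : p.1 = q.1 := by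
        have := congrFun (he1.trans he2.symm) 0
        simpa [Fin.cons_zero] using this
      have htail : d1 = d2 := funext fun i => by
        have := congrFun (he1.trans he2.symm) i.succ
        simpa [Fin.cons_succ] using this
      have h2 : p.2 = q.2 := by
        rw [← sum_eq_of_mem_decs hd1, ← sum_eq_of_mem_decs hd2, htail]
      exact Prod.ext h0 h2
    refine Finset.sum_congr rfl fun p _ => ?_
    rw [ih _ (fun i => hs i.succ) _ (fun i => hB i.succ) p.2, Finset.mul_sum, Finset.sum_image ?hinj]
    case hinj =>
      intro x _ y _ hxy
      exact (Fin.cons_injective2 hxy).2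
    refine Finset.sum_congr rfl fun d _ => ?_
    rw [Fin.prod_univ_succ]
    simp only [Fin.cons_zero, Fin.cons_succ]


open Finset in
theorem key_comm (F : FreeData G n) (P : Fin n → Prop) [DecidablePred P] (j : Fin n)
    (hj : P j) (Q : Fin n → HahnSeries G R) (z : Fin n → Fin n → ℤ) (g : G)
    (hg : F.coord g = 0) :
    (Matrix.of fun i k => if P i then F.Eul k (Q i)
      else HahnSeries.C ((z i k : ℤ) : R)).det.coeff g = 0 := by
  classical
  set M : Matrix (Fin n) (Fin n) (HahnSeries G R) :=
    Matrix.of fun i k => if P i then F.Eul k (Q i) else HahnSeries.C ((z i k : ℤ) : R) with hM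
  -- the uniform PWO support bounds
  set s : Fin n → Set G := fun i => if P i then (Q i).support else {0} with hsdef
  have hs : ∀ i, (s i).IsPWO := fun i => by
    by_cases h : P i
    · rw [hsdef]; simp only [if_pos h]; exact (Q i).isPWO_support
    · rw [hsdef]; simp only [if_neg h]; exact (Set.finite_singleton 0).isPWO
  have hMs : ∀ (c : Fin n → Fin n) (i : Fin n), (M i (c i)).support ⊆ s i := by
    intro c i
    by_cases h : P i
    · rw [hM, hsdef]
      simp only [Matrix.of_apply, if_pos h]
      exact F.support_Eul _ _
    · rw [hM, hsdef]
      simp only [Matrix.of_apply, if_neg h]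
      exact HahnSeries.support_single_subset
  rw [← Matrix.det_transpose, Matrix.det_apply', coeff_sum]
  have hterm : ∀ σ : Equiv.Perm (Fin n),
      (((Equiv.Perm.sign σ : ℤ) : HahnSeries G R) * ∏ i, M.transpose (σ i) i).coeff g
        = ∑ d ∈ decs G n s hs g,
            ((Equiv.Perm.sign σ : ℤ) : R) * ∏ i, (M i (σ i)).coeff (d i) := by
    intro σ
    rw [show (((Equiv.Perm.sign σ : ℤ)) : HahnSeries G R)
        = HahnSeries.C (((Equiv.Perm.sign σ : ℤ)) : R) from (map_intCast _ _).symm,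
      C_mul_coeff]
    have : ∀ i, M.transpose (σ i) i = M i (σ i) := fun i => rfl
    rw [Finset.prod_congr rfl fun i _ => this i,
      prod_coeff s hs (fun i => M i (σ i)) (hMs fun i => σ i) g, Finset.mul_sum]
  rw [Finset.sum_congr rfl fun σ _ => hterm σ, Finset.sum_comm]
  refine Finset.sum_eq_zero fun d hd => ?_
  have hdsum : ∑ i, d i = g := sum_eq_of_mem_decs hd
  -- the scalar matrix of row vectors
  set V : Matrix (Fin n) (Fin n) R :=
    Matrix.of fun i k => if P i then (F.coord (d i) k : R) else ((z i k : ℤ) : R) with hV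
  set c : Fin n → R := fun i =>
    if P i then (Q i).coeff (d i) else (1 : HahnSeries G R).coeff (d i) with hc
  have hfac : ∀ (σ : Equiv.Perm (Fin n)) (i : Fin n),
      (M i (σ i)).coeff (d i) = V i (σ i) * c i := by
    intro σ i
    by_cases h : P i
    · rw [hM, hV, hc]
      simp only [Matrix.of_apply, if_pos h, Eul_coeff]
    · rw [hM, hV, hc]
      simp only [Matrix.of_apply, if_neg h]
      rw [HahnSeries.C_apply, HahnSeries.coeff_single, HahnSeries.coeff_one]
      split_ifs <;> simp
  have hstep : ∀ σ : Equiv.Perm (Fin n),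
      ((Equiv.Perm.sign σ : ℤ) : R) * ∏ i, (M i (σ i)).coeff (d i)
        = (((Equiv.Perm.sign σ : ℤ) : R) * ∏ i, V i (σ i)) * ∏ i, c i := by
    intro σ
    rw [Finset.prod_congr rfl fun i _ => hfac σ i, Finset.prod_mul_distrib, ← mul_assoc]
  rw [Finset.sum_congr rfl fun σ _ => hstep σ, ← Finset.sum_mul]
  have hdet : ∑ σ : Equiv.Perm (Fin n), ((Equiv.Perm.sign σ : ℤ) : R) * ∏ i, V i (σ i)
      = V.transpose.det := by
    rw [Matrix.det_apply']
    rfl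
  rw [hdet]
  by_cases hz : ∀ i, ¬ P i → d i = 0
  · have hzero : V.transpose.det = 0 := by
      rw [Matrix.det_transpose]
      refine det_rows_sum_zero V (univ.filter P) j (by simp [hj]) ?_
      funext k
      rw [show (∑ i ∈ univ.filter P, V i) k = ∑ i ∈ univ.filter P, V i k from
        Finset.sum_apply k _ _]
      have h1 : ∑ i ∈ univ.filter P, V i k = ((∑ i ∈ univ.filter P, F.coord (d i) k : ℤ) : R) := by
        rw [Int.cast_sum]
        refine Finset.sum_congr rfl fun i hi => ?_
        rw [hV]
        simp only [Matrix.of_apply, if_pos (Finset.mem_filter.mp hi).2]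
      have h2 : ∑ i ∈ univ.filter P, d i = g := by
        have h3 : ∑ i ∈ univ.filter (fun i => ¬ P i), d i = 0 :=
          Finset.sum_eq_zero fun i hi => hz i (Finset.mem_filter.mp hi).2
        have h4 := Finset.sum_filter_add_sum_filter_not univ P d
        rw [h3, add_zero] at h4
        rw [h4, hdsum]
      have h5 : ∑ i ∈ univ.filter P, F.coord (d i) k = F.coord g k := by
        rw [← h2]
        exact (map_sum (F.coordHom k) d _).symm
      rw [h1, h5, hg]
      simp
    rw [hzero, zero_mul]
  · push_neg at hz
    obtain ⟨i0, hP0, hd0⟩ := hz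
    have hcz : ∏ i, c i = 0 := by
      refine Finset.prod_eq_zero (Finset.mem_univ i0) ?_
      rw [hc]
      simp only [if_neg hP0]
      rw [HahnSeries.coeff_one, if_neg hd0]
    rw [hcz, mul_zero]


/-- Coefficientwise pushforward along a ring hom, as a ring hom of Hahn series rings. -/
noncomputable def mapRH (f : R →+* S) : HahnSeries G R →+* HahnSeries G S where
  toFun x := x.map f
  map_zero' := by ext g; simp [HahnSeries.map_coeff]
  map_one' := by
    ext g
    simp only [HahnSeries.map_coeff, HahnSeries.coeff_one]
    split_ifs <;> simp
  map_add' x y := by ext g; simp [HahnSeries.map_coeff]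
  map_mul' x y := HahnSeries.map_mul (f : R →ₙ+* S)

@[simp] theorem mapRH_coeff (f : R →+* S) (x : HahnSeries G R) (g : G) :
    (mapRH (G := G) f x).coeff g = f (x.coeff g) := rfl

theorem mapRH_Eul (F : FreeData G n) (f : R →+* S) (k : Fin n) (x : HahnSeries G R) :
    mapRH f (F.Eul k x) = F.Eul k (mapRH f x) := by
  ext g
  simp [mapRH_coeff, Eul_coeff]

theorem mapRH_C (f : R →+* S) (r : R) :
    mapRH (G := G) f (HahnSeries.C r) = HahnSeries.C (f r) := by
  ext g
  simp only [mapRH_coeff, HahnSeries.C_apply, HahnSeries.coeff_single]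
  split_ifs <;> simp

open Finset in
theorem key_field0 (F : FreeData G n) (P : Fin n → Prop) [DecidablePred P] (j : Fin n)
    (hj : P j) (Ψ : Fin n → HahnSeries G κ) (m : Fin n → ℕ) (z : Fin n → Fin n → ℤ) (g : G)
    (hg : F.coord g = 0) :
    (Matrix.of fun i k => if P i then (Ψ i) ^ (m i) * F.Eul k (Ψ i)
      else HahnSeries.C ((z i k : ℤ) : κ)).det.coeff g = 0 := by
  classical
  set R₀ := MvPolynomial (Fin n × G) ℤ with hR₀
  set f : R₀ →+* κ :=
    MvPolynomial.eval₂Hom (Int.castRingHom κ) (fun p => (Ψ p.1).coeff p.2) with hf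
  set Ψ' : Fin n → HahnSeries G R₀ := fun i =>
    { coeff := fun a => if (Ψ i).coeff a = 0 then 0 else MvPolynomial.X (i, a)
      isPWO_support' := (Ψ i).isPWO_support.mono fun a ha => by
        simp only [Function.mem_support, ne_eq] at ha ⊢
        intro h0
        exact ha (by rw [h0, if_pos rfl]) } with hΨ'
  have hmap : ∀ i, mapRH f (Ψ' i) = Ψ i := by
    intro i
    ext a
    rw [mapRH_coeff, hΨ']
    show f (if (Ψ i).coeff a = 0 then 0 else MvPolynomial.X (i, a)) = (Ψ i).coeff a
    by_cases h : (Ψ i).coeff a = 0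
    · rw [if_pos h, map_zero, h]
    · rw [if_neg h, hf]
      exact MvPolynomial.eval₂Hom_X' _ _ _
  set M₁ : Matrix (Fin n) (Fin n) (HahnSeries G R₀) :=
    Matrix.of fun i k => if P i then (Ψ' i) ^ (m i) * F.Eul k (Ψ' i)
      else HahnSeries.C ((z i k : ℤ) : R₀) with hM₁
  -- Step 1: vanishing over R₀ after multiplication by the product of exponents
  have hkey : (Matrix.of fun i k => if P i then F.Eul k ((Ψ' i) ^ (m i + 1))
      else HahnSeries.C ((z i k : ℤ) : R₀)).det.coeff g = 0 :=
    key_comm F P j hj _ z g hg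
  have hrow : (Matrix.of fun i k => if P i then F.Eul k ((Ψ' i) ^ (m i + 1))
      else HahnSeries.C ((z i k : ℤ) : R₀))
      = Matrix.of fun i k =>
          (if P i then ((m i + 1 : ℕ) : HahnSeries G R₀) else 1) * M₁ i k := by
    ext i k
    by_cases h : P i
    · simp only [Matrix.of_apply, if_pos h, hM₁]
      rw [Eul_pow]
    · simp only [Matrix.of_apply, if_neg h, hM₁, one_mul]
  rw [hrow, Matrix.det_mul_column] at hkey
  set N : ℕ := ∏ i, (if P i then m i + 1 else 1) with hN
  have hprod : (∏ i, (if P i then ((m i + 1 : ℕ) : HahnSeries G R₀) else 1))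
      = ((N : ℕ) : HahnSeries G R₀) := by
    rw [hN, Nat.cast_prod]
    refine Finset.prod_congr rfl fun i _ => ?_
    split_ifs <;> simp
  rw [hprod] at hkey
  have hcast : ((N : ℕ) : HahnSeries G R₀) = HahnSeries.C ((N : ℕ) : R₀) :=
    (map_natCast (HahnSeries.C : R₀ →+* HahnSeries G R₀) N).symm
  rw [hcast, C_mul_coeff] at hkey
  have hNpos : 0 < N := Finset.prod_pos fun i _ => by split_ifs <;> omega
  have hN0 : ((N : ℕ) : R₀) ≠ 0 := Nat.cast_ne_zero.mpr hNpos.ne'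
  have hdet0 : M₁.det.coeff g = 0 := by
    rcases mul_eq_zero.mp hkey with h | h
    · exact absurd h hN0
    · exact h
  -- Step 2: transport along `mapRH f`
  have htrans : (Matrix.of fun i k => if P i then (Ψ i) ^ (m i) * F.Eul k (Ψ i)
      else HahnSeries.C ((z i k : ℤ) : κ)) = (mapRH (G := G) f).mapMatrix M₁ := by
    refine Matrix.ext fun i k => ?_
    simp only [RingHom.mapMatrix_apply, Matrix.map_apply, hM₁, Matrix.of_apply]
    by_cases h : P i
    · rw [if_pos h, if_pos h, map_mul, map_pow, hmap, mapRH_Eul, hmap]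
    · rw [if_neg h, if_neg h, mapRH_C, map_intCast f]
  rw [htrans, ← RingHom.map_det]
  show ((M₁.det).map f).coeff g = 0
  rw [HahnSeries.map_coeff, hdet0, map_zero]


/-- A "good" row: a scalar multiple of `Ψ^m dΨ` in Euler coordinates. -/
def GoodR (F : FreeData G n) (r : Fin n → HahnSeries G κ) : Prop :=
  ∃ (c : κ) (Ψ : HahnSeries G κ) (m : ℕ), r = fun k => c • ((Ψ ^ m) * F.Eul k Ψ)

/-- A constant (integer) row. -/
def ConstR (r : Fin n → HahnSeries G κ) : Prop :=
  ∃ zz : Fin n → ℤ, r = fun k => HahnSeries.C ((zz k : ℤ) : κ)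

/-- An admissible row: good, constant, or logarithmic. -/
def OkR (F : FreeData G n) (r : Fin n → HahnSeries G κ) : Prop :=
  GoodR F r ∨ ConstR r ∨ ∃ Φ : HahnSeries G κ, Φ ≠ 0 ∧ r = fun k => Φ⁻¹ * F.Eul k Φ

theorem smul_eq_C_mul (c : κ) (x : HahnSeries G κ) :
    c • x = HahnSeries.C c * x := by
  rw [HahnSeries.C_apply, HahnSeries.single_zero_mul_eq_smul]

open Finset in
theorem key_field (F : FreeData G n) (A : Matrix (Fin n) (Fin n) (HahnSeries G κ))
    (hA : ∀ i, GoodR F (A i) ∨ ConstR (A i)) (j : Fin n) (hj : GoodR F (A j)) (g : G)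
    (hg : F.coord g = 0) : A.det.coeff g = 0 := by
  classical
  have hch : ∀ i, ∃ (c : κ) (Ψ : HahnSeries G κ) (m : ℕ) (zz : Fin n → ℤ),
      (GoodR F (A i) → A i = fun k => c • (Ψ ^ m * F.Eul k Ψ)) ∧
      (¬ GoodR F (A i) → A i = fun k => HahnSeries.C ((zz k : ℤ) : κ)) := by
    intro i
    by_cases h : GoodR F (A i)
    · obtain ⟨c, Ψ, m, hr⟩ := h
      exact ⟨c, Ψ, m, 0, fun _ => hr, fun h' => absurd (⟨c, Ψ, m, hr⟩ : GoodR F (A i)) h'⟩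
    · obtain ⟨zz, hr⟩ := (hA i).resolve_left h
      exact ⟨1, 0, 0, zz, fun hg' => absurd hg' h, fun _ => hr⟩
  choose c Ψ m zz hgood hconst using hch
  set P : Fin n → Prop := fun i => GoodR F (A i) with hP
  have hA' : A = Matrix.of fun i k =>
      (if P i then HahnSeries.C (c i) else 1) *
      (if P i then (Ψ i ^ m i * F.Eul k (Ψ i)) else HahnSeries.C ((zz i k : ℤ) : κ)) := by
    refine Matrix.ext fun i k => ?_
    by_cases h : P i
    · simp only [Matrix.of_apply, if_pos h]
      rw [← smul_eq_C_mul, congrFun (hgood i h) k]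
    · simp only [Matrix.of_apply, if_neg h, one_mul]
      rw [congrFun (hconst i h) k]
  have hmc := Matrix.det_mul_column (fun i => if P i then HahnSeries.C (c i) else 1)
    (Matrix.of fun i k =>
      if P i then (Ψ i ^ m i * F.Eul k (Ψ i)) else HahnSeries.C ((zz i k : ℤ) : κ))
  simp only [Matrix.of_apply] at hmc
  rw [hA', hmc]
  have hCprod : (∏ i, if P i then HahnSeries.C (c i) else (1 : HahnSeries G κ))
      = HahnSeries.C (∏ i, if P i then c i else 1) := by
    rw [map_prod]
    refine Finset.prod_congr rfl fun i _ => ?_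
    split_ifs <;> simp
  rw [hCprod, C_mul_coeff]
  exact mul_eq_zero_of_right _ (key_field0 F P j hj Ψ m zz g hg)


open scoped Classical in
open Finset in
theorem clm (F : FreeData G n) (j : Fin n) (g : G) (hg : F.coord g = 0) :
    ∀ (N : ℕ) (A : Matrix (Fin n) (Fin n) (HahnSeries G κ)),
      (Finset.univ.filter fun i => ¬ (GoodR F (A i) ∨ ConstR (A i))).card ≤ N →
      (∀ i, OkR F (A i)) → GoodR F (A j) → A.det.coeff g = 0 := by
  intro N
  induction N with
  | zero =>
    intro A hcard hA hj
    refine key_field F A (fun i => ?_) j hj g hg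
    by_contra h
    have hi : i ∈ Finset.univ.filter fun i => ¬ (GoodR F (A i) ∨ ConstR (A i)) :=
      Finset.mem_filter.mpr ⟨Finset.mem_univ _, h⟩
    have := Finset.card_pos.mpr ⟨i, hi⟩
    omega
  | succ N ih =>
    intro A hcard hA hj
    by_cases hbase : ∀ i, GoodR F (A i) ∨ ConstR (A i)
    · exact key_field F A hbase j hj g hg
    push_neg at hbase
    obtain ⟨i0, hi0⟩ := hbase
    have hi0mem : i0 ∈ Finset.univ.filter fun i => ¬ (GoodR F (A i) ∨ ConstR (A i)) :=
      Finset.mem_filter.mpr ⟨Finset.mem_univ _, not_or.mpr hi0⟩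
    obtain ⟨Φ, hΦ, hrow⟩ := ((hA i0).resolve_left hi0.1).resolve_left hi0.2
    have hij : i0 ≠ j := fun h => hi0.1 (h ▸ hj)
    have hcard' : ∀ (r : Fin n → HahnSeries G κ), (GoodR F r ∨ ConstR r) →
        (Finset.univ.filter fun i => ¬ (GoodR F ((A.updateRow i0 r) i) ∨
          ConstR ((A.updateRow i0 r) i))).card ≤ N := by
      intro r hr
      have hsub : (Finset.univ.filter fun i => ¬ (GoodR F ((A.updateRow i0 r) i) ∨
          ConstR ((A.updateRow i0 r) i)))
          ⊆ (Finset.univ.filter fun i => ¬ (GoodR F (A i) ∨ ConstR (A i))).erase i0 := by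
        intro i hi
        rw [Finset.mem_filter] at hi
        have hne : i ≠ i0 := by
          rintro rfl
          rw [Matrix.updateRow_self] at hi
          exact hi.2 hr
        rw [Finset.mem_erase, Finset.mem_filter]
        refine ⟨hne, Finset.mem_univ _, ?_⟩
        have h2 := hi.2
        rwa [Matrix.updateRow_ne hne] at h2
      have hle := Finset.card_le_card hsub
      rw [Finset.card_erase_of_mem hi0mem] at hle
      omega
    have hupOk : ∀ (r : Fin n → HahnSeries G κ), (GoodR F r ∨ ConstR r) →
        (∀ i, OkR F ((A.updateRow i0 r) i)) := by
      intro r hr i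
      by_cases h : i = i0
      · subst h
        rw [Matrix.updateRow_self]
        rcases hr with h | h
        · exact Or.inl h
        · exact Or.inr (Or.inl h)
      · rw [Matrix.updateRow_ne h]
        exact hA i
    have hupj : ∀ (r : Fin n → HahnSeries G κ), GoodR F ((A.updateRow i0 r) j) := by
      intro r
      rw [Matrix.updateRow_ne (Ne.symm hij)]
      exact hj
    -- leading-term data
    have hlc : Φ.leadingCoeff ≠ 0 := HahnSeries.leadingCoeff_ne_zero.mpr hΦ
    obtain ⟨v, hvdef⟩ : ∃ t : HahnSeries G κ,
        t = HahnSeries.single (-Φ.order) Φ.leadingCoeff⁻¹ * Φ := ⟨_, rfl⟩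
    obtain ⟨y, hydef, hy⟩ : ∃ t : HahnSeries G κ, t = 1 - v ∧ 0 < t.orderTop :=
      ⟨_, rfl, by rw [hvdef]; exact HahnSeries.unit_aux Φ (inv_mul_cancel₀ hlc) _ (neg_add_cancel _)⟩
    have hv1 : v * (HahnSeries.SummableFamily.powers y).hsum = 1 := by
      have h := HahnSeries.SummableFamily.one_sub_self_mul_hsum_powers hy
      rwa [show (1 : HahnSeries G κ) - y = v from by rw [hydef]; ring] at h
    have hvne : v ≠ 0 := left_ne_zero_of_mul_eq_one hv1
    have hφne : (HahnSeries.single Φ.order Φ.leadingCoeff : HahnSeries G κ) ≠ 0 :=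
      HahnSeries.single_ne_zero hlc
    have hvinv : v⁻¹ = (HahnSeries.SummableFamily.powers y).hsum :=
      inv_eq_of_mul_eq_one_right hv1
    have hΦfac : Φ = HahnSeries.single Φ.order Φ.leadingCoeff * v := by
      rw [hvdef, ← mul_assoc, HahnSeries.single_mul_single, add_neg_cancel,
        mul_inv_cancel₀ hlc, HahnSeries.single_zero_one, one_mul]
    have hEv : ∀ k, F.Eul k v = - F.Eul k y := by
      intro k
      have hveq : v = 1 - y := by rw [hydef]; ring
      rw [hveq, sub_eq_add_neg, F.Eul_add, F.Eul_one, F.Eul_neg, zero_add]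
    -- decomposition of the logarithmic row
    have hrowdec : A i0 = (fun k => HahnSeries.C ((F.coord Φ.order k : ℤ) : κ))
        + fun k => v⁻¹ * F.Eul k v := by
      funext k
      rw [Pi.add_apply, congrFun hrow k]
      conv_lhs => rw [hΦfac]
      rw [F.Eul_mul, Eul_single, smul_eq_C_mul, mul_inv]
      field_simp
    have hAsplit : A.det
        = (A.updateRow i0 (fun k => HahnSeries.C ((F.coord Φ.order k : ℤ) : κ))).det
          + (A.updateRow i0 (fun k => v⁻¹ * F.Eul k v)).det := by
      rw [← Matrix.det_updateRow_add, ← hrowdec, Matrix.updateRow_eq_self]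
    rw [hAsplit, HahnSeries.coeff_add]
    have hconstrow : ConstR (G := G) (κ := κ)
        (fun k => HahnSeries.C ((F.coord Φ.order k : ℤ) : κ)) :=
      ⟨fun k => F.coord Φ.order k, rfl⟩
    have h1 : (A.updateRow i0
        (fun k => HahnSeries.C ((F.coord Φ.order k : ℤ) : κ))).det.coeff g = 0 :=
      ih _ (hcard' _ (Or.inr hconstrow)) (hupOk _ (Or.inr hconstrow)) (hupj _)
    rw [h1, zero_add]
    have hsmul1 : (fun k => v⁻¹ * F.Eul k v) = v⁻¹ • (fun k => F.Eul k v) := rfl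
    rw [hsmul1, Matrix.det_updateRow_smul, hvinv]
    have h3 : (HahnSeries.SummableFamily.powers y).hsum
          * (A.updateRow i0 (fun k => F.Eul k v)).det
        = ((A.updateRow i0 (fun k => F.Eul k v)).det
            • (HahnSeries.SummableFamily.powers y)).hsum := by
      rw [HahnSeries.SummableFamily.hsum_smul, mul_comm]
    rw [h3, HahnSeries.SummableFamily.coeff_hsum]
    refine finsum_eq_zero_of_forall_eq_zero fun t => ?_
    have h4 : ((A.updateRow i0 (fun k => F.Eul k v)).det
        • (HahnSeries.SummableFamily.powers y)) t
        = (A.updateRow i0 (fun k => F.Eul k v)).det * y ^ t := by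
      rw [HahnSeries.SummableFamily.smul_apply, HahnSeries.of_symm_smul_of_eq_mul]
      rw [HahnSeries.SummableFamily.coe_powers hy]
    have hsmul2 : (fun k => y ^ t * F.Eul k v) = y ^ t • (fun k => F.Eul k v) := rfl
    have h5 : (A.updateRow i0 (fun k => y ^ t * F.Eul k v)).det
        = y ^ t * (A.updateRow i0 (fun k => F.Eul k v)).det := by
      rw [hsmul2, Matrix.det_updateRow_smul]
    rw [h4, mul_comm, ← h5]
    have hgoodrow : GoodR F (fun k => y ^ t * F.Eul k v) := by
      refine ⟨-1, y, t, ?_⟩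
      funext k
      rw [hEv k, smul_eq_C_mul]
      simp only [map_neg, map_one]
      ring
    exact ih _ (hcard' _ (Or.inl hgoodrow)) (hupOk _ (Or.inl hgoodrow)) (hupj _)

theorem rowGood (F : FreeData G n) (Φ : HahnSeries G κ) (hΦ : Φ ≠ 0) (e : ℤ) (he : e ≠ 1) :
    GoodR F (fun k => F.Eul k Φ / Φ ^ e) := by
  by_cases h0 : e ≤ 0
  · refine ⟨1, Φ, (-e).toNat, ?_⟩
    funext k
    rw [one_smul, mul_comm]
    have he' : e = -(((-e).toNat : ℕ) : ℤ) := by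
      rw [Int.toNat_of_nonneg (neg_nonneg.mpr h0)]; ring
    rw [show Φ ^ e = (Φ ^ ((-e).toNat : ℕ))⁻¹ from by
      conv_lhs => rw [he']
      rw [zpow_neg, zpow_natCast]]
    rw [div_inv_eq_mul]
  · have h2 : 2 ≤ e := by omega
    refine ⟨-1, Φ⁻¹, (e - 2).toNat, ?_⟩
    funext k
    have hm : e = (((e - 2).toNat : ℕ) : ℤ) + 2 := by
      rw [Int.toNat_of_nonneg (by omega : (0:ℤ) ≤ e - 2)]; ring
    have hzp : Φ ^ e = Φ ^ (((e - 2).toNat : ℕ) + 2) := by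
      conv_lhs => rw [hm]
      rw [show ((((e - 2).toNat : ℕ) : ℤ) + 2) = (((e - 2).toNat + 2 : ℕ) : ℤ) from by
        push_cast; ring, zpow_natCast]
    have hml := F.Eul_mul k Φ Φ⁻¹
    rw [mul_inv_cancel₀ hΦ, F.Eul_one] at hml
    have h4 : Φ * (Φ * F.Eul k Φ⁻¹) = -F.Eul k Φ := by
      have h3 : Φ * F.Eul k Φ⁻¹ = -(F.Eul k Φ * Φ⁻¹) := by linear_combination -hml
      rw [h3, mul_neg, ← mul_assoc, mul_comm Φ (F.Eul k Φ), mul_assoc,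
        mul_inv_cancel₀ hΦ, mul_one]
    have h5 : F.Eul k Φ = -(Φ * (Φ * F.Eul k Φ⁻¹)) := by rw [h4, neg_neg]
    rw [hzp, neg_one_smul, inv_pow, div_eq_iff (pow_ne_zero _ hΦ), h5]
    field_simp
    ring

theorem rowLog (F : FreeData G n) (Φ : HahnSeries G κ) :
    (fun k => F.Eul k Φ / Φ ^ (1:ℤ)) = fun k => Φ⁻¹ * F.Eul k Φ := by
  funext k
  rw [zpow_one, div_eq_inv_mul]

end FreeData
end Aux

open FreeData in
/-- Vanishing of coefficients: for nonzero generalized power series `Φ₁,…,Φₙ` and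
integers `i₁,…,iₙ` with some `iⱼ ≠ 1`, the `κ[[e^H]]`-coefficient of
`(dΦ₁/Φ₁^{i₁}) ∧ ⋯ ∧ (dΦₙ/Φₙ^{iₙ})` at `dlog X = (dX₁∧⋯∧dXₙ)/(X₁⋯Xₙ)` is zero.
In coordinates, the `n`-form is `det(∂Φᵢ/∂Xₖ / Φᵢ^{iᵢ}) · dX₁∧⋯∧dXₙ`, and its
`κ[[e^H]]`-coefficient at `(X₁⋯Xₙ)⁻¹` is the series with `κ`-coefficients at
`e^{h - (u₁+⋯+uₙ)}` for `h ∈ H`; all of these vanish. -/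
theorem vanishing_of_coefficients (F : FreeData G n)
    (Φ : Fin n → HahnSeries G κ) (hΦ : ∀ i, Φ i ≠ 0)
    (e : Fin n → ℤ) (j : Fin n) (hj : e j ≠ 1) :
    ∀ h ∈ F.H,
      (Matrix.of fun i k => F.pderiv k (Φ i) / (Φ i) ^ (e i)).det.coeff
        (h - ∑ i, F.u i) = 0 := by
  intro h hh
  classical
  set M : Matrix (Fin n) (Fin n) (HahnSeries G κ) :=
    Matrix.of fun i k => F.pderiv k (Φ i) / (Φ i) ^ (e i) with hM
  set A : Matrix (Fin n) (Fin n) (HahnSeries G κ) :=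
    Matrix.of fun i k => F.Eul k (Φ i) / (Φ i) ^ (e i) with hA
  have hAM : A = Matrix.of fun i k => F.X κ k * M i k := by
    refine Matrix.ext fun i k => ?_
    show F.Eul k (Φ i) / (Φ i) ^ (e i) = F.X κ k * (F.pderiv k (Φ i) / (Φ i) ^ (e i))
    rw [← mul_div_assoc, F.X_mul_pderiv]
  have hXprod : ∀ s : Finset (Fin n),
      (∏ k ∈ s, F.X κ k) = HahnSeries.single (∑ k ∈ s, F.u k) (1 : κ) := by
    intro s
    induction s using Finset.induction_on with
    | empty =>
      rw [Finset.prod_empty, Finset.sum_empty]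
      exact HahnSeries.single_zero_one.symm
    | insert _ _ hx ih =>
      rw [Finset.prod_insert hx, Finset.sum_insert hx, ih, FreeData.X,
        HahnSeries.single_mul_single, one_mul]
  have hdet : A.det = HahnSeries.single (∑ k, F.u k) (1 : κ) * M.det := by
    rw [hAM, Matrix.det_mul_row, hXprod]
  have hcoeff : A.det.coeff h = M.det.coeff (h - ∑ k, F.u k) := by
    rw [hdet]
    conv_lhs => rw [show h = (h - ∑ k, F.u k) + ∑ k, F.u k from (sub_add_cancel _ _).symm]
    rw [HahnSeries.coeff_single_mul_add, one_mul]
  rw [show (Matrix.of fun i k => F.pderiv k (Φ i) / (Φ i) ^ (e i)).det.coeff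
      (h - ∑ i, F.u i) = M.det.coeff (h - ∑ k, F.u k) from rfl, ← hcoeff]
  refine clm F j h (F.coord_of_mem hh) n A ?_ ?_ ?_
  · calc (Finset.univ.filter fun i => ¬ (GoodR F (A i) ∨ ConstR (A i))).card
        ≤ Finset.univ.card := Finset.card_filter_le _ _
    _ = n := by simp
  · intro i
    by_cases h1 : e i = 1
    · refine Or.inr (Or.inr ⟨Φ i, hΦ i, ?_⟩)
      show A i = _
      have : A i = fun k => F.Eul k (Φ i) / (Φ i) ^ (e i) := rfl
      rw [this, h1]
      exact rowLog F (Φ i)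
    · refine Or.inl ?_
      have : A i = fun k => F.Eul k (Φ i) / (Φ i) ^ (e i) := rfl
      rw [this]
      exact rowGood F (Φ i) (hΦ i) (e i) h1
  · have : A j = fun k => F.Eul k (Φ j) / (Φ j) ^ (e j) := rfl
    rw [this]
    exact rowGood F (Φ j) (hΦ j) (e j) hj
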